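/- Let m and n be distinct positive integers, let s be a nonempty finite sequence of positive integers, and let k > 0. Then the length of every orbit of the bijection t ↦ C_{m,n}(s, t) on the set {m, n}^k is a power of 2. -/

import Mathlib

/-- `expand1 m n x s` : the expansion `E_{m,n}(s, x)` of the finite sequence `s` with the
single starting point `x ∈ {m, n}`: the unique sequence with values in `{m, n}`, first term
`x`, and run-lengths `s`. -/
def expand1 (m n : ℕ) : ℕ → List ℕ → List ℕ
  | _, [] => []
  | x, a :: l => List.replicate a x ++ expand1 m n (m + n - x) l

/-- `expand m n s t` : the expansion `E_{m,n}(s, t)` of the finite sequence `s` with the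
finite sequence of starting points `t` (values in `{m, n}`), defined by
`E_{m,n}(s, t₁ t') = E_{m,n}(E_{m,n}(s, t₁), t')`. -/
def expand (m n : ℕ) : List ℕ → List ℕ → List ℕ
  | s, [] => s
  | s, x :: t => expand m n (expand1 m n x s) t

/-- `torsion m n s t` : the torsion `C_{m,n}(s, t)`, the sequence of the same length as `t`
whose `k`-th term equals `m + n` minus the last term of `E_{m,n}(s, t⁽ᵏ⁾)`, where `t⁽ᵏ⁾`
consists of the first `k` terms of `t`. -/
def torsion (m n : ℕ) (s t : List ℕ) : List ℕ :=
  (List.range t.length).map fun k => m + n - (expand m n s (t.take (k + 1))).getLastD 0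

/-!
Write `x̄ = m + n - x`. The torsion map `f = C_{m,n}(s, ·)` is triangular: the first `j` terms
of `f t` only depend on the first `j` terms of `t`, and `f (u ++ [x]) = f u ++ [x]` or
`f u ++ [x̄]`, according to the parity of `|E_{m,n}(s, u)|`, because the expansion of a sequence
of odd (even) length with starting point `x` ends with `x` (with `x̄`). Hence `f` acts on the last
coordinate through the group `{id, x ↦ x̄}` of order two, and induction on the length of `t`
gives `f^[2 ^ |t|] t = t`.
-/

open Function

section Triangular

variable {α : Type*} {p : α → Prop} {φ : α → α} {f : List α → List α}

theorem exists_iterate_append_singleton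
    (hfp : Set.MapsTo f {u | ∀ a ∈ u, p a} {u | ∀ a ∈ u, p a})
    (hf : ∀ u, (∀ a ∈ u, p a) → ∃ M, ∀ x, f (u ++ [x]) = f u ++ [φ^[M] x])
    {u : List α} (hu : ∀ a ∈ u, p a) (j : ℕ) :
    ∃ M, ∀ x, f^[j] (u ++ [x]) = f^[j] u ++ [φ^[M] x] := by
  induction j with
  | zero => exact ⟨0, fun _ => rfl⟩
  | succ j ih =>
    obtain ⟨M, hM⟩ := ih
    obtain ⟨N, hN⟩ := hf _ (hfp.iterate j hu)
    exact ⟨N + M, fun x => by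
      rw [iterate_succ_apply', iterate_succ_apply', hM, hN, iterate_add_apply]⟩

theorem isPeriodicPt_two_pow_length (hφ : ∀ x, p x → φ (φ x) = x) (hf₀ : f [] = [])
    (hfp : Set.MapsTo f {u | ∀ a ∈ u, p a} {u | ∀ a ∈ u, p a})
    (hf : ∀ u, (∀ a ∈ u, p a) → ∃ M, ∀ x, f (u ++ [x]) = f u ++ [φ^[M] x])
    {u : List α} (hu : ∀ a ∈ u, p a) : IsPeriodicPt f (2 ^ u.length) u := by
  induction u using List.reverseRecOn with
  | nil => exact hf₀
  | append_singleton u x ih =>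
    have hu' : ∀ a ∈ u, p a := fun a ha => hu a (by simp [ha])
    have hx : IsPeriodicPt φ 2 x := hφ x (hu x (by simp))
    obtain ⟨M, hM⟩ := exists_iterate_append_singleton hfp hf hu' (2 ^ u.length)
    simp only [(ih hu').eq] at hM
    show f^[2 ^ (u ++ [x]).length] (u ++ [x]) = u ++ [x]
    rw [List.length_append, List.length_singleton, pow_succ, mul_two, iterate_add_apply, hM, hM,
      ← iterate_add_apply, ← two_mul, (hx.mul_const M).eq]

end Triangular

variable {m n : ℕ}

theorem mapsTo_tsub_Ioo : Set.MapsTo (m + n - ·) (Set.Ioo 0 (m + n)) (Set.Ioo 0 (m + n)) :=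
  fun x hx => by simp only [Set.mem_Ioo] at hx ⊢; omega

theorem mem_expand1 {x a : ℕ} {s : List ℕ} (ha : a ∈ expand1 m n x s) :
    ∃ j, a = (m + n - ·)^[j] x := by
  induction s generalizing x with
  | nil => simp [expand1] at ha
  | cons b s ih =>
    simp only [expand1, List.mem_append, List.mem_replicate] at ha
    rcases ha with ⟨-, rfl⟩ | ha
    · exact ⟨0, rfl⟩
    · obtain ⟨j, rfl⟩ := ih ha
      exact ⟨j + 1, rfl⟩

theorem expand1_ne_nil (x : ℕ) {s : List ℕ} (hs : s ≠ []) (hsp : ∀ a ∈ s, 0 < a) :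
    expand1 m n x s ≠ [] := by
  obtain ⟨a, s, rfl⟩ := List.exists_cons_of_ne_nil hs
  simp [expand1, (hsp a (by simp)).ne']

theorem expand1_append_singleton (x a : ℕ) (l : List ℕ) :
    expand1 m n x (l ++ [a]) =
      expand1 m n x l ++ List.replicate a ((m + n - ·)^[l.length] x) := by
  induction l generalizing x with
  | nil => simp [expand1]
  | cons b l ih => simp [expand1, ih, iterate_succ_apply]

theorem sub_getLastD_expand1 (x : ℕ) {l : List ℕ} (hl : l ≠ []) (hlp : ∀ a ∈ l, 0 < a) :
    m + n - (expand1 m n x l).getLastD 0 = (m + n - ·)^[l.length] x := by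
  obtain ⟨l, a, rfl⟩ := (List.eq_nil_or_concat' l).resolve_left hl
  have ha : a ≠ 0 := (hlp a (by simp)).ne'
  simp [expand1_append_singleton, List.getLast?_replicate, ha, iterate_succ_apply']

theorem expand_append_singleton (s t : List ℕ) (x : ℕ) :
    expand m n s (t ++ [x]) = expand1 m n x (expand m n s t) := by
  induction t generalizing s with
  | nil => rfl
  | cons y t ih => exact ih (expand1 m n y s)

theorem expand1_pos {x : ℕ} (hx : x ∈ Set.Ioo 0 (m + n)) (s : List ℕ) :
    ∀ a ∈ expand1 m n x s, 0 < a := fun _ ha => by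
  obtain ⟨j, rfl⟩ := mem_expand1 ha
  exact (mapsTo_tsub_Ioo.iterate j hx).1

theorem expand_pos {s t : List ℕ} (hsp : ∀ a ∈ s, 0 < a)
    (ht : ∀ a ∈ t, a ∈ Set.Ioo 0 (m + n)) : ∀ a ∈ expand m n s t, 0 < a := by
  induction t generalizing s with
  | nil => exact hsp
  | cons x t ih => exact ih (expand1_pos (ht x (by simp)) s) fun a ha => ht a (by simp [ha])

theorem expand_ne_nil {s t : List ℕ} (hs : s ≠ []) (hsp : ∀ a ∈ s, 0 < a)
    (ht : ∀ a ∈ t, a ∈ Set.Ioo 0 (m + n)) : expand m n s t ≠ [] := by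
  induction t generalizing s with
  | nil => exact hs
  | cons x t ih =>
    exact ih (expand1_ne_nil x hs hsp) (expand1_pos (ht x (by simp)) s)
      fun a ha => ht a (by simp [ha])

theorem torsion_nil (s : List ℕ) : torsion m n s [] = [] := rfl

theorem torsion_append_singleton (s t : List ℕ) (x : ℕ) :
    torsion m n s (t ++ [x]) =
      torsion m n s t ++ [m + n - (expand m n s (t ++ [x])).getLastD 0] := by
  unfold torsion
  rw [List.length_append, List.length_singleton, List.range_succ, List.map_append]
  congr 1
  · refine List.map_congr_left fun k hk => ?_
    rw [List.mem_range] at hk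
    rw [List.take_append, show k + 1 - t.length = 0 by omega, List.take_zero, List.append_nil]
  · rw [List.map_singleton, List.take_of_length_le (by simp)]

theorem torsion_append_singleton_of_mem_Ioo {s u : List ℕ} (hs : s ≠ [])
    (hsp : ∀ a ∈ s, 0 < a) (hu : ∀ a ∈ u, a ∈ Set.Ioo 0 (m + n)) (x : ℕ) :
    torsion m n s (u ++ [x]) =
      torsion m n s u ++ [(m + n - ·)^[(expand m n s u).length] x] := by
  rw [torsion_append_singleton, expand_append_singleton,
    sub_getLastD_expand1 x (expand_ne_nil hs hsp hu) (expand_pos hsp hu)]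

theorem mapsTo_torsion {s : List ℕ} (hs : s ≠ []) (hsp : ∀ a ∈ s, 0 < a) :
    Set.MapsTo (torsion m n s) {u | ∀ a ∈ u, a ∈ Set.Ioo 0 (m + n)}
      {u | ∀ a ∈ u, a ∈ Set.Ioo 0 (m + n)} := by
  intro u hu
  induction u using List.reverseRecOn with
  | nil => simp [torsion_nil]
  | append_singleton u x ih =>
    have hu' : ∀ a ∈ u, a ∈ Set.Ioo 0 (m + n) := fun a ha => hu a (by simp [ha])
    rw [Set.mem_ofPred_eq, torsion_append_singleton_of_mem_Ioo hs hsp hu']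
    intro a ha
    rcases List.mem_append.mp ha with ha | ha
    · exact ih hu' a ha
    · rw [List.mem_singleton.mp ha]
      exact mapsTo_tsub_Ioo.iterate _ (hu x (by simp))

theorem torsion_orbit_length_pow_two_general (m n : ℕ) (hm : 0 < m) (hn : 0 < n)
    (s : List ℕ) (hs : s ≠ []) (hsp : ∀ a ∈ s, 0 < a) (k : ℕ)
    (t : List ℕ) (htl : t.length = k) (htv : ∀ a ∈ t, a = m ∨ a = n) :
    ∃ i : ℕ, Function.minimalPeriod (torsion m n s) t = 2 ^ i := by
  have ht : ∀ a ∈ t, a ∈ Set.Ioo 0 (m + n) := fun a ha => by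
    rcases htv a ha with rfl | rfl <;> simp only [Set.mem_Ioo] <;> omega
  have hper : IsPeriodicPt (torsion m n s) (2 ^ k) t := htl ▸
    isPeriodicPt_two_pow_length (fun x hx => by simp only [Set.mem_Ioo] at hx; omega)
      (torsion_nil s) (mapsTo_torsion hs hsp)
      (fun u hu => ⟨_, torsion_append_singleton_of_mem_Ioo hs hsp hu⟩) ht
  obtain ⟨i, -, hi⟩ := (Nat.dvd_prime_pow Nat.prime_two).mp hper.minimalPeriod_dvd
  exact ⟨i, hi⟩

/-- Every orbit of the bijection `t ↦ C_{m,n}(s, t)` on `{m, n}^k` has length a power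
of `2` (the orbit length being the minimal period of the point under the map). -/
theorem torsion_orbit_length_pow_two (m n : ℕ) (hm : 0 < m) (hn : 0 < n) (hmn : m ≠ n)
    (s : List ℕ) (hs : s ≠ []) (hsp : ∀ a ∈ s, 0 < a) (k : ℕ) (hk : 0 < k)
    (t : List ℕ) (htl : t.length = k) (htv : ∀ a ∈ t, a = m ∨ a = n) :
    ∃ i : ℕ, Function.minimalPeriod (torsion m n s) t = 2 ^ i :=
  torsion_orbit_length_pow_two_general m n hm hn s hs hsp k t htl htv
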